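/- Let C be an open convex cone containing no lines, and let x, y lie on distinct rays of ∂C∖{0}. Then the sets B(x) and B(y) of Hilbert-geometry Busemann points associated with x and y are disjoint; that is, no Hilbert Busemann point arises both as a limit of an almost-geodesic converging (in the usual sense) to x and as a limit of an almost-geodesic converging to y. -/

import Mathlib

open Set Filter Topology

variable {V : Type*} [NormedAddCommGroup V] [NormedSpace ℝ V] [FiniteDimensional ℝ V]

/-- An open cone: non-empty, open, convex, invariant under positive scaling, not containing 0. -/
def IsOpenCone (T : Set V) : Prop :=
  T.Nonempty ∧ IsOpen T ∧ Convex ℝ T ∧ (∀ c : ℝ, 0 < c → ∀ u ∈ T, c • u ∈ T) ∧ (0 : V) ∉ T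

/-- The gauge `M_T(y/x) = inf {λ > 0 : λ • x - y ∈ closure T}`. -/
noncomputable def funkM (T : Set V) (y x : V) : ℝ :=
  sInf {l : ℝ | 0 < l ∧ l • x - y ∈ closure T}

/-- The Funk metric `F_T(x,y) = log inf {λ > 0 : λ • y - x ∈ closure T}`. -/
noncomputable def funkF (T : Set V) (x y : V) : ℝ := Real.log (funkM T x y)

/-- The reverse Funk metric `r_T(x,y) = F_T(y,x)`. -/
noncomputable def revF (T : Set V) (x y : V) : ℝ := Real.log (funkM T y x)

/-- The Hilbert metric as the symmetrisation of the Funk metric. -/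
noncomputable def hilD (T : Set V) (x y : V) : ℝ := funkF T x y + revF T x y

/-- The dual cone, as a set of continuous linear functionals. -/
def dualCone (T : Set V) : Set (V →L[ℝ] ℝ) := {z | ∀ u ∈ T, 0 ≤ z u}

/-- The open tangent cone `τ(T,x) = {λ (w - x) : λ > 0, w ∈ T}`. -/
def openTangent (T : Set V) (x : V) : Set V :=
  {v | ∃ l : ℝ, 0 < l ∧ ∃ w ∈ T, v = l • (w - x)}

/-- A sequence is an almost-geodesic for `d` if, for some `ε > 0`, the sums of consecutive
distances exceed the direct distance by at most `ε`. -/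
def AlmostGeod {W : Type*} (d : W → W → ℝ) (x : ℕ → W) : Prop :=
  ∃ ε : ℝ, 0 < ε ∧ ∀ l : ℕ, 1 ≤ l →
    (∑ i ∈ Finset.range l, d (x i) (x (i + 1))) ≤ d (x 0) (x l) + ε

/-!
Interleave the two almost-geodesics, choosing each new point so that the horofunction `h` drops
by almost the Hilbert distance travelled. The result is a single Hilbert almost-geodesic `z`
whose odd terms tend to `x` and whose even terms tend to `y`. As the Funk part obeys the triangle
inequality, `z` is also an almost-geodesic for the reverse Funk metric `r`.

Let `Q n = exp (∑ j < n, r (z j) (z (j+1)))`. Since `exp (r u v) = M_C(v/u)` is the least `m`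
with `m • u - v ∈ closure C`, the points `(Q n)⁻¹ • z n` decrease in the order of `closure C`.
Moreover `Q n = M_C(z n / z 0) * exp (excess n)`, where the excess of the almost-geodesic is
monotone and bounded, so `Q` converges along any subsequence on which `z` tends to a nonzero point of
`closure C`. A decreasing sequence in a cone without lines has at most one cluster point, so
`x` and `y` lie on the same ray.
-/

-- Weaker than a metric: the Funk and reverse-Funk distances on a cone are neither symmetric nor
-- nonnegative.
structure TriangleIneqOn {W : Type*} (d : W → W → ℝ) (S : Set W) : Prop where
  self_eq_zero : ∀ u ∈ S, d u u = 0
  le_add : ∀ u ∈ S, ∀ v ∈ S, ∀ w ∈ S, d u w ≤ d u v + d v w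

def pathExcess {W : Type*} (d : W → W → ℝ) (z : ℕ → W) (n : ℕ) : ℝ :=
  ∑ i ∈ Finset.range n, d (z i) (z (i + 1)) - d (z 0) (z n)

namespace TriangleIneqOn

variable {W : Type*} {d : W → W → ℝ} {S : Set W}

theorem add {d' : W → W → ℝ} (hd : TriangleIneqOn d S) (hd' : TriangleIneqOn d' S) :
    TriangleIneqOn (fun u v => d u v + d' u v) S where
  self_eq_zero u hu := by simp only [hd.self_eq_zero u hu, hd'.self_eq_zero u hu, add_zero]
  le_add u hu v hv w hw := by
    linarith [hd.le_add u hu v hv w hw, hd'.le_add u hu v hv w hw]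

section Path

variable (hd : TriangleIneqOn d S) {z : ℕ → W} (hz : ∀ n, z n ∈ S)
include hd hz

theorem le_sum_Ico {m n : ℕ} (hmn : m ≤ n) :
    d (z m) (z n) ≤ ∑ i ∈ Finset.Ico m n, d (z i) (z (i + 1)) := by
  induction n, hmn using Nat.le_induction with
  | base => simp [hd.self_eq_zero _ (hz m)]
  | succ n hmn ih =>
    rw [Finset.sum_Ico_succ_top hmn]
    linarith [hd.le_add _ (hz m) _ (hz n) _ (hz (n + 1))]

theorem monotone_pathExcess : Monotone (pathExcess d z) := by
  refine monotone_nat_of_le_succ fun n => ?_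
  simp only [pathExcess, Finset.sum_range_succ]
  linarith [hd.le_add _ (hz 0) _ (hz n) _ (hz (n + 1))]

theorem exists_tendsto_pathExcess (hgeod : AlmostGeod d z) :
    ∃ L, Tendsto (pathExcess d z) atTop (𝓝 L) := by
  obtain ⟨ε, hε, hle⟩ := hgeod
  refine ⟨_, tendsto_atTop_ciSup (hd.monotone_pathExcess hz) ⟨ε, ?_⟩⟩
  rintro _ ⟨n, rfl⟩
  rcases Nat.eq_zero_or_pos n with rfl | hn
  · simp [pathExcess, hd.self_eq_zero _ (hz 0), hε.le]
  · simp only [pathExcess]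
    linarith [hle n hn]

end Path

section Horofunction

variable (hd : TriangleIneqOn d S) {b : W} {h : W → ℝ} {ws : ℕ → W} (hws : ∀ n, ws n ∈ S)
  (hlim : ∀ u ∈ S, Tendsto (fun n => d u (ws n) - d b (ws n)) atTop (𝓝 (h u)))
include hd hws hlim

theorem horofunction_le_add {u w : W} (hu : u ∈ S) (hw : w ∈ S) : h u ≤ d u w + h w :=
  le_of_tendsto_of_tendsto' (hlim u hu) (tendsto_const_nhds.add (hlim w hw)) fun n => by
    linarith [hd.le_add _ hu _ hw _ (hws n)]

theorem tendsto_horofunction_add_of_almostGeod (hb : b ∈ S) (hgeod : AlmostGeod d ws) :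
    Tendsto (fun n => h (ws n) + d b (ws n)) atTop (𝓝 0) := by
  obtain ⟨L, hL⟩ := hd.exists_tendsto_pathExcess hws hgeod
  have hle_L := (hd.monotone_pathExcess hws).ge_of_tendsto hL
  have lower : ∀ n, 0 ≤ h (ws n) + d b (ws n) := fun n => by
    have : -d b (ws n) ≤ h (ws n) := ge_of_tendsto (hlim _ (hws n)) <|
      Eventually.of_forall fun k => by linarith [hd.le_add _ hb _ (hws n) _ (hws k)]
    linarith
  -- the excess of the path from `ws n` to `ws k` is at most `L - pathExcess d ws n`
  have upper : ∀ n, h (ws n) + d b (ws n) ≤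
      h (ws 0) - (d (ws 0) (ws n) - d b (ws n)) + (L - pathExcess d ws n) := fun n => by
    have hk : ∀ᶠ k in atTop, d (ws n) (ws k) - d b (ws k) ≤
        (d (ws 0) (ws k) - d b (ws k)) + L - pathExcess d ws n - d (ws 0) (ws n) := by
      filter_upwards [eventually_ge_atTop n] with k hnk
      have hchain := hd.le_sum_Ico hws hnk
      rw [Finset.sum_Ico_eq_sub _ hnk] at hchain
      simp only [pathExcess] at hle_L ⊢
      linarith [hle_L k]
    have := le_of_tendsto_of_tendsto (hlim _ (hws n))
      ((((hlim _ (hws 0)).add_const L).sub_const _).sub_const _) hk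
    linarith
  refine squeeze_zero lower upper ?_
  simpa using ((tendsto_const_nhds (x := h (ws 0))).sub (hlim _ (hws 0))).add
    ((tendsto_const_nhds (x := L)).sub hL)

theorem exists_dist_le_and_le_horofunction_sub [PseudoMetricSpace W] (hb : b ∈ S)
    (hgeod : AlmostGeod d ws) {w : W} (hw : Tendsto ws atTop (𝓝 w)) {p : W} (hp : p ∈ S) {c : ℝ}
    (hc : 0 < c) : ∃ q ∈ S, d p q ≤ h p - h q + c ∧ dist q w ≤ c := by
  have := (hlim p hp).add (hd.tendsto_horofunction_add_of_almostGeod hws hlim hb hgeod)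
  obtain ⟨n, hn, hnw⟩ := ((this.eventually_lt_const (by linarith : h p + 0 < h p + c)).and
    (hw.eventually (Metric.closedBall_mem_nhds w hc))).exists
  exact ⟨ws n, hws n, by linarith, hnw⟩

end Horofunction

end TriangleIneqOn

theorem almostGeod_of_le_sub_add_geometric {W : Type*} {d : W → W → ℝ} {h : W → ℝ}
    {z : ℕ → W} (hh : ∀ l, h (z 0) ≤ d (z 0) (z l) + h (z l))
    (hstep : ∀ j, d (z j) (z (j + 1)) ≤ h (z j) - h (z (j + 1)) + (1 / 2) ^ j) :
    AlmostGeod d z := by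
  refine ⟨2, two_pos, fun l _ => ?_⟩
  calc ∑ i ∈ Finset.range l, d (z i) (z (i + 1))
      ≤ ∑ i ∈ Finset.range l, (h (z i) - h (z (i + 1)) + (1 / 2) ^ i) :=
        Finset.sum_le_sum fun i _ => hstep i
    _ = h (z 0) - h (z l) + ∑ i ∈ Finset.range l, (1 / 2 : ℝ) ^ i := by
        rw [Finset.sum_add_distrib, Finset.sum_range_sub' (fun i => h (z i))]
    _ ≤ d (z 0) (z l) + 2 := by linarith [hh l, sum_geometric_two_le l]

theorem exists_interleaved_seq {W : Type*} [PseudoMetricSpace W] {d : W → W → ℝ} {S : Set W}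
    {h : W → ℝ} {b x y : W} (hb : b ∈ S)
    (hx : ∀ p ∈ S, ∀ c > 0, ∃ q ∈ S, d p q ≤ h p - h q + c ∧ dist q x ≤ c)
    (hy : ∀ p ∈ S, ∀ c > 0, ∃ q ∈ S, d p q ≤ h p - h q + c ∧ dist q y ≤ c) :
    ∃ z : ℕ → W, (∀ j, z j ∈ S) ∧
      (∀ j, d (z j) (z (j + 1)) ≤ h (z j) - h (z (j + 1)) + (1 / 2) ^ j) ∧
      Tendsto (fun k => z (2 * k + 1)) atTop (𝓝 x) ∧
      Tendsto (fun k => z (2 * k + 2)) atTop (𝓝 y) := by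
  choose! fx hfxS hfx hfxx using hx
  choose! fy hfyS hfy hfyy using hy
  let next (j : ℕ) (p : W) : W := if Even j then fx p ((1 / 2) ^ j) else fy p ((1 / 2) ^ j)
  let z (n : ℕ) : W := Nat.rec b next n
  have hz : ∀ j, z j ∈ S := by
    intro j
    induction j with
    | zero => exact hb
    | succ j ih =>
      by_cases hj : Even j
      · simpa [z, next, hj] using hfxS _ ih _ (by positivity)
      · simpa [z, next, hj] using hfyS _ ih _ (by positivity)
  have hnear : ∀ j, dist (z (j + 1)) (if Even j then x else y) ≤ (1 / 2) ^ j := by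
    intro j
    by_cases hj : Even j
    · simpa [z, next, hj] using hfxx _ (hz j) _ (by positivity)
    · simpa [z, next, hj] using hfyy _ (hz j) _ (by positivity)
  have htendsto : ∀ {t : W} {u : ℕ → W}, (∀ k, dist (u k) t ≤ (1 / 2) ^ (2 * k)) →
      Tendsto u atTop (𝓝 t) := fun hf =>
    tendsto_iff_dist_tendsto_zero.2 <| squeeze_zero (fun _ => dist_nonneg)
      (fun k => (hf k).trans (pow_le_pow_of_le_one (by norm_num) (by norm_num) (by omega)))
      (tendsto_pow_atTop_nhds_zero_of_lt_one (by norm_num : (0 : ℝ) ≤ 1 / 2) (by norm_num))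
  refine ⟨z, hz, fun j => ?_, htendsto fun k => ?_, htendsto fun k => ?_⟩
  · by_cases hj : Even j
    · simpa [z, next, hj] using hfx _ (hz j) _ (by positivity)
    · simpa [z, next, hj] using hfy _ (hz j) _ (by positivity)
  · simpa using hnear (2 * k)
  · simpa using (hnear (2 * k + 1)).trans
      (pow_le_pow_of_le_one (by norm_num) (by norm_num) (Nat.le_succ _))

theorem eq_of_tendsto_of_sub_mem_closure {E : Type*} [AddCommGroup E] [TopologicalSpace E]
    [IsTopologicalAddGroup E] {C : Set E}
    (hlines : ∀ v, v ∈ closure C → -v ∈ closure C → v = 0) {w : ℕ → E}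
    (hw : ∀ i j, i ≤ j → w i - w j ∈ closure C) {φ χ : ℕ → ℕ} (hφ : Tendsto φ atTop atTop)
    (hχ : Tendsto χ atTop atTop) {a a' : E} (ha : Tendsto (fun k => w (φ k)) atTop (𝓝 a))
    (ha' : Tendsto (fun k => w (χ k)) atTop (𝓝 a')) : a = a' := by
  have key : ∀ {φ χ : ℕ → ℕ} {a a' : E}, Tendsto χ atTop atTop →
      Tendsto (fun k => w (φ k)) atTop (𝓝 a) → Tendsto (fun k => w (χ k)) atTop (𝓝 a') →
      a - a' ∈ closure C := by
    intro φ χ a a' hχ ha ha'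
    have hi : ∀ i, w i - a' ∈ closure C := fun i =>
      isClosed_closure.mem_of_tendsto (tendsto_const_nhds.sub ha')
        ((hχ.eventually_ge_atTop i).mono fun k hk => hw i (χ k) hk)
    exact isClosed_closure.mem_of_tendsto (ha.sub tendsto_const_nhds)
      (Eventually.of_forall fun k => hi (φ k))
  exact sub_eq_zero.1 (hlines _ (key hχ ha ha') (by simpa using key hφ ha' ha))

section Cone

variable {E : Type*} [NormedAddCommGroup E] [NormedSpace ℝ E]

theorem funkM_nonneg (C : Set E) (u v : E) : 0 ≤ funkM C u v :=
  Real.sInf_nonneg fun _ hl => hl.1.le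

noncomputable def revFunkWeight (C : Set E) (z : ℕ → E) (n : ℕ) : ℝ :=
  Real.exp (∑ i ∈ Finset.range n, revF C (z i) (z (i + 1)))

theorem revFunkWeight_pos (C : Set E) (z : ℕ → E) (n : ℕ) : 0 < revFunkWeight C z n :=
  Real.exp_pos _

namespace IsOpenCone

variable {C : Set E} (hC : IsOpenCone C)
include hC

theorem smul_mem {c : ℝ} (hc : 0 < c) {v : E} (hv : v ∈ C) : c • v ∈ C :=
  hC.2.2.2.1 c hc v hv

theorem ne_zero_of_mem {v : E} (hv : v ∈ C) : v ≠ 0 :=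
  fun h0 => hC.2.2.2.2 (h0 ▸ hv)

theorem add_mem {u v : E} (hu : u ∈ C) (hv : v ∈ C) : u + v ∈ C := by
  have e : u + v = (2 : ℝ) • ((1 / 2 : ℝ) • u + (1 / 2 : ℝ) • v) := by module
  rw [e]
  exact hC.smul_mem two_pos (hC.2.2.1 hu hv (by norm_num) (by norm_num) (by norm_num))

theorem zero_mem_closure : (0 : E) ∈ closure C := by
  obtain ⟨u, hu⟩ := hC.1
  have h : Tendsto (fun t : ℝ => t • u) (𝓝[>] 0) (𝓝 0) :=
    ((continuous_id.smul continuous_const).tendsto' 0 0 (zero_smul ℝ u)).mono_left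
      nhdsWithin_le_nhds
  exact mem_closure_of_tendsto h (eventually_nhdsWithin_of_forall fun t ht => hC.smul_mem ht hu)

theorem smul_mem_closure {c : ℝ} (hc : 0 ≤ c) {v : E} (hv : v ∈ closure C) :
    c • v ∈ closure C := by
  rcases hc.eq_or_lt with rfl | hc
  · simpa using hC.zero_mem_closure
  · exact map_mem_closure (continuous_const_smul c) hv fun _ hu => hC.smul_mem hc hu

theorem add_mem_closure {u v : E} (hu : u ∈ closure C) (hv : v ∈ closure C) :
    u + v ∈ closure C :=
  map_mem_closure₂ continuous_add hu hv fun _ ha _ hb => hC.add_mem ha hb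

theorem smul_sub_mem_of_ball {v u : E} {ρ l : ℝ} (hball : Metric.ball v ρ ⊆ C) (hl : 0 < l)
    (hu : ‖u‖ < l * ρ) : l • v - u ∈ C := by
  have hmem : v - l⁻¹ • u ∈ C := hball <| by
    rw [Metric.mem_ball, dist_eq_norm, sub_sub_cancel_left, norm_neg, norm_smul,
      Real.norm_of_nonneg (inv_nonneg.2 hl.le), inv_mul_lt_iff₀ hl]
    exact hu
  rw [show l • v - u = l • (v - l⁻¹ • u) by rw [smul_sub, smul_inv_smul₀ hl.ne']]
  exact hC.smul_mem hl hmem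

theorem funkM_le {u v : E} {l : ℝ} (hv : v ∈ C) (hl : 0 ≤ l) (h : l • v - u ∈ closure C) :
    funkM C u v ≤ l := by
  refine le_of_forall_gt_imp_ge_of_dense fun l' hl' =>
    csInf_le ⟨0, fun _ hx => hx.1.le⟩ ⟨hl.trans_lt hl', ?_⟩
  rw [show l' • v - u = (l' - l) • v + (l • v - u) by module]
  exact hC.add_mem_closure (subset_closure (hC.smul_mem (sub_pos.2 hl') hv)) h

theorem funkM_le_norm_div {u v : E} {ρ : ℝ} (hρ : 0 < ρ) (hball : Metric.ball v ρ ⊆ C) :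
    funkM C u v ≤ ‖u‖ / ρ := by
  refine le_of_forall_gt_imp_ge_of_dense fun l hl => ?_
  have hl0 : 0 < l := (div_nonneg (norm_nonneg u) hρ.le).trans_lt hl
  exact hC.funkM_le (hball (Metric.mem_ball_self hρ)) hl0.le
    (subset_closure (hC.smul_sub_mem_of_ball hball hl0 ((div_lt_iff₀ hρ).1 hl)))

theorem smul_sub_mem_closure_funkM {v : E} (hv : v ∈ C) (u : E) :
    funkM C u v • v - u ∈ closure C := by
  obtain ⟨ρ, hρ, hball⟩ := Metric.isOpen_iff.1 hC.2.1 v hv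
  have hne : {l : ℝ | 0 < l ∧ l • v - u ∈ closure C}.Nonempty := by
    have hl : 0 < (‖u‖ + 1) / ρ := by positivity
    refine ⟨_, hl, subset_closure (hC.smul_sub_mem_of_ball hball hl ?_)⟩
    rw [div_mul_cancel₀ _ hρ.ne']
    linarith
  have habove : ∀ l ∈ Ioi (funkM C u v), l • v - u ∈ closure C := by
    intro l hl
    obtain ⟨l', ⟨-, hl'⟩, hl'l⟩ := exists_lt_of_csInf_lt hne hl
    rw [show l • v - u = (l - l') • v + (l' • v - u) by module]
    exact hC.add_mem_closure
      (hC.smul_mem_closure (sub_nonneg.2 hl'l.le) (subset_closure hv)) hl'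
  have hlim :
      Tendsto (fun l : ℝ => l • v - u) (𝓝[>] (funkM C u v)) (𝓝 (funkM C u v • v - u)) :=
    ((continuous_id.smul continuous_const).sub continuous_const).continuousWithinAt.tendsto
  exact isClosed_closure.mem_of_tendsto hlim (eventually_nhdsWithin_of_forall habove)

theorem funkM_add_le {v : E} (hv : v ∈ C) (u u' : E) :
    funkM C (u + u') v ≤ funkM C u v + funkM C u' v := by
  refine hC.funkM_le hv (add_nonneg (funkM_nonneg C u v) (funkM_nonneg C u' v)) ?_
  rw [show (funkM C u v + funkM C u' v) • v - (u + u') =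
    (funkM C u v • v - u) + (funkM C u' v • v - u') by module]
  exact hC.add_mem_closure (hC.smul_sub_mem_closure_funkM hv u)
    (hC.smul_sub_mem_closure_funkM hv u')

theorem continuous_funkM_left {v : E} (hv : v ∈ C) : Continuous fun u => funkM C u v := by
  obtain ⟨ρ, hρ, hball⟩ := Metric.isOpen_iff.1 hC.2.1 v hv
  refine (LipschitzWith.of_le_add_mul ⟨ρ⁻¹, inv_nonneg.2 hρ.le⟩ fun u u' => ?_).continuous
  calc funkM C u v = funkM C (u' + (u - u')) v := by rw [add_sub_cancel]
    _ ≤ funkM C u' v + funkM C (u - u') v := hC.funkM_add_le hv _ _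
    _ ≤ funkM C u' v + ρ⁻¹ * dist u u' := by
      rw [dist_eq_norm, ← div_eq_inv_mul]
      gcongr
      exact hC.funkM_le_norm_div hρ hball

theorem funkM_mul_le {u v w : E} (hv : v ∈ C) (hw : w ∈ C) :
    funkM C u w ≤ funkM C u v * funkM C v w := by
  refine hC.funkM_le hw (mul_nonneg (funkM_nonneg C u v) (funkM_nonneg C v w)) ?_
  rw [show (funkM C u v * funkM C v w) • w - u =
    funkM C u v • (funkM C v w • w - v) + (funkM C u v • v - u) by module]
  exact hC.add_mem_closure
    (hC.smul_mem_closure (funkM_nonneg C u v) (hC.smul_sub_mem_closure_funkM hw v))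
    (hC.smul_sub_mem_closure_funkM hv u)

variable (hlines : ∀ v, v ∈ closure C → -v ∈ closure C → v = 0)
include hlines

theorem funkM_pos {u v : E} (hu : u ∈ closure C) (hu0 : u ≠ 0) (hv : v ∈ C) :
    0 < funkM C u v := by
  refine (funkM_nonneg C u v).lt_of_ne fun h0 => hu0 (hlines u hu ?_)
  simpa [← h0] using hC.smul_sub_mem_closure_funkM hv u

theorem funkM_self {v : E} (hv : v ∈ C) : funkM C v v = 1 := by
  refine le_antisymm (hC.funkM_le hv zero_le_one (by simpa using hC.zero_mem_closure)) ?_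
  by_contra! hlt
  have hpos : (1 - funkM C v v) • v ∈ C := hC.smul_mem (sub_pos.2 hlt) hv
  have hneg : -((1 - funkM C v v) • v) ∈ closure C := by
    convert hC.smul_sub_mem_closure_funkM hv v using 1
    module
  exact hC.ne_zero_of_mem hpos (hlines _ (subset_closure hpos) hneg)

theorem funkM_pos_of_mem {u v : E} (hu : u ∈ C) (hv : v ∈ C) : 0 < funkM C u v :=
  hC.funkM_pos hlines (subset_closure hu) (hC.ne_zero_of_mem hu) hv

theorem triangleIneqOn_funkF : TriangleIneqOn (funkF C) C where
  self_eq_zero v hv := by rw [funkF, hC.funkM_self hlines hv, Real.log_one]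
  le_add u hu v hv w hw := by
    have hpos : ∀ {a c : E}, a ∈ C → c ∈ C → 0 < funkM C a c := hC.funkM_pos_of_mem hlines
    rw [funkF, funkF, funkF, ← Real.log_mul (hpos hu hv).ne' (hpos hv hw).ne']
    exact Real.log_le_log (hpos hu hw) (hC.funkM_mul_le hv hw)

theorem triangleIneqOn_revF : TriangleIneqOn (revF C) C where
  self_eq_zero v hv := (hC.triangleIneqOn_funkF hlines).self_eq_zero v hv
  le_add u hu v hv w hw := by
    have := (hC.triangleIneqOn_funkF hlines).le_add w hw v hv u hu
    simp only [revF, funkF] at this ⊢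
    linarith

theorem triangleIneqOn_hilD : TriangleIneqOn (hilD C) C :=
  (hC.triangleIneqOn_funkF hlines).add (hC.triangleIneqOn_revF hlines)

theorem almostGeod_revF_of_hilD {z : ℕ → E} (hz : ∀ n, z n ∈ C)
    (hgeod : AlmostGeod (hilD C) z) : AlmostGeod (revF C) z := by
  obtain ⟨ε, hε, hle⟩ := hgeod
  refine ⟨ε, hε, fun l hl => ?_⟩
  have hfunk := (hC.triangleIneqOn_funkF hlines).le_sum_Ico hz (Nat.zero_le l)
  rw [← Finset.range_eq_Ico] at hfunk
  have := hle l hl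
  simp only [hilD, Finset.sum_add_distrib] at this
  linarith

theorem revFunkWeight_succ {z : ℕ → E} (hz : ∀ n, z n ∈ C) (n : ℕ) :
    revFunkWeight C z (n + 1) = revFunkWeight C z n * funkM C (z (n + 1)) (z n) := by
  rw [revFunkWeight, revFunkWeight, Finset.sum_range_succ, Real.exp_add, revF,
    Real.exp_log (hC.funkM_pos_of_mem hlines (hz _) (hz n))]

theorem revFunkWeight_eq {z : ℕ → E} (hz : ∀ n, z n ∈ C) (n : ℕ) :
    revFunkWeight C z n = funkM C (z n) (z 0) * Real.exp (pathExcess (revF C) z n) := by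
  have hpos := hC.funkM_pos_of_mem hlines (hz n) (hz 0)
  rw [revFunkWeight, pathExcess, revF, Real.exp_sub, Real.exp_log hpos,
    mul_div_cancel₀ _ hpos.ne']

theorem inv_revFunkWeight_smul_sub_mem_closure {z : ℕ → E} (hz : ∀ n, z n ∈ C) {i j : ℕ}
    (hij : i ≤ j) :
    (revFunkWeight C z i)⁻¹ • z i - (revFunkWeight C z j)⁻¹ • z j ∈ closure C := by
  induction j, hij using Nat.le_induction with
  | base => simpa using hC.zero_mem_closure
  | succ j hij ih =>
    have hstep : (revFunkWeight C z j)⁻¹ • z j - (revFunkWeight C z (j + 1))⁻¹ • z (j + 1) =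
        (revFunkWeight C z (j + 1))⁻¹ • (funkM C (z (j + 1)) (z j) • z j - z (j + 1)) := by
      rw [hC.revFunkWeight_succ hlines hz, smul_sub, smul_smul, mul_inv, mul_assoc,
        inv_mul_cancel₀ (hC.funkM_pos_of_mem hlines (hz _) (hz j)).ne', mul_one]
    rw [← sub_add_sub_cancel _ ((revFunkWeight C z j)⁻¹ • z j), hstep]
    exact hC.add_mem_closure ih <|
      hC.smul_mem_closure (inv_nonneg.2 (revFunkWeight_pos C z _).le)
        (hC.smul_sub_mem_closure_funkM (hz j) _)

theorem exists_pos_smul_eq_of_almostGeod_revF {z : ℕ → E} (hz : ∀ n, z n ∈ C)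
    (hgeod : AlmostGeod (revF C) z) {φ χ : ℕ → ℕ} (hφ : Tendsto φ atTop atTop)
    (hχ : Tendsto χ atTop atTop) {p q : E} (hp : p ∈ closure C) (hp0 : p ≠ 0)
    (hq : q ∈ closure C) (hq0 : q ≠ 0) (hzp : Tendsto (fun k => z (φ k)) atTop (𝓝 p))
    (hzq : Tendsto (fun k => z (χ k)) atTop (𝓝 q)) :
    ∃ t : ℝ, 0 < t ∧ q = t • p := by
  obtain ⟨L, hL⟩ := (hC.triangleIneqOn_revF hlines).exists_tendsto_pathExcess hz hgeod
  set c : E → ℝ := fun p => funkM C p (z 0) * Real.exp L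
  have hc : ∀ {p}, p ∈ closure C → p ≠ 0 → 0 < c p := fun hp hp0 =>
    mul_pos (hC.funkM_pos hlines hp hp0 (hz 0)) (Real.exp_pos L)
  have hlim : ∀ {φ : ℕ → ℕ} {p : E}, p ∈ closure C → p ≠ 0 → Tendsto φ atTop atTop →
      Tendsto (fun k => z (φ k)) atTop (𝓝 p) →
      Tendsto (fun k => (revFunkWeight C z (φ k))⁻¹ • z (φ k)) atTop (𝓝 ((c p)⁻¹ • p)) := by
    intro φ p hp hp0 hφ hzp
    have hweight : Tendsto (fun k => revFunkWeight C z (φ k)) atTop (𝓝 (c p)) := by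
      simp only [hC.revFunkWeight_eq hlines hz]
      exact (((hC.continuous_funkM_left (hz 0)).tendsto p).comp hzp).mul
        ((Real.continuous_exp.tendsto L).comp (hL.comp hφ))
    exact (hweight.inv₀ (hc hp hp0).ne').smul hzp
  have heq := eq_of_tendsto_of_sub_mem_closure hlines
    (fun i j => hC.inv_revFunkWeight_smul_sub_mem_closure hlines hz) hφ hχ
    (hlim hp hp0 hφ hzp) (hlim hq hq0 hχ hzq)
  refine ⟨c q * (c p)⁻¹, mul_pos (hc hq hq0) (inv_pos.2 (hc hp hp0)), ?_⟩
  rw [mul_smul, heq, smul_inv_smul₀ (hc hq hq0).ne']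

end IsOpenCone

end Cone

theorem busemann_sets_disjoint_general (C : Set V) (hC : IsOpenCone C)
    (hlines : ∀ v, v ∈ closure C → -v ∈ closure C → v = 0)
    (b : V) (hb : b ∈ C)
    (x y : V) (hx : x ∈ frontier C) (hx0 : x ≠ 0) (hy : y ∈ frontier C) (hy0 : y ≠ 0)
    (hray : ¬ ∃ t : ℝ, 0 < t ∧ y = t • x)
    (h : V → ℝ)
    (hBx : ∃ xs : ℕ → V, (∀ n, xs n ∈ C) ∧ AlmostGeod (hilD C) xs ∧
        Tendsto xs atTop (𝓝 x) ∧
        ∀ u ∈ C, Tendsto (fun n => hilD C u (xs n) - hilD C b (xs n)) atTop (𝓝 (h u)))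
    (hBy : ∃ ys : ℕ → V, (∀ n, ys n ∈ C) ∧ AlmostGeod (hilD C) ys ∧
        Tendsto ys atTop (𝓝 y) ∧
        ∀ u ∈ C, Tendsto (fun n => hilD C u (ys n) - hilD C b (ys n)) atTop (𝓝 (h u))) :
    False := by
  obtain ⟨xs, hxs, hxsgeod, hxsx, hxsh⟩ := hBx
  obtain ⟨ys, hys, hysgeod, hysy, hysh⟩ := hBy
  have hd := hC.triangleIneqOn_hilD hlines
  obtain ⟨z, hz, hstep, hzx, hzy⟩ := exists_interleaved_seq hb
    (fun p hp c hc => hd.exists_dist_le_and_le_horofunction_sub hxs hxsh hb hxsgeod hxsx hp hc)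
    (fun p hp c hc => hd.exists_dist_le_and_le_horofunction_sub hys hysh hb hysgeod hysy hp hc)
  have hgeod : AlmostGeod (hilD C) z := almostGeod_of_le_sub_add_geometric
    (fun l => hd.horofunction_le_add hxs hxsh (hz 0) (hz l)) hstep
  exact hray <| hC.exists_pos_smul_eq_of_almostGeod_revF hlines hz
    (hC.almostGeod_revF_of_hilD hlines hz hgeod)
    (tendsto_atTop_mono (fun k => (by omega : k ≤ 2 * k + 1)) tendsto_id)
    (tendsto_atTop_mono (fun k => (by omega : k ≤ 2 * k + 2)) tendsto_id)
    (frontier_subset_closure hx) hx0 (frontier_subset_closure hy) hy0 hzx hzy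

/-- Hilbert-geometry Busemann points attained along almost-geodesics
converging to boundary points on distinct rays are distinct: the sets `B(x)` and `B(y)`
are disjoint. -/
theorem busemann_sets_disjoint (C : Set V) (hC : IsOpenCone C)
    (hlines : ∀ v, v ∈ closure C → -v ∈ closure C → v = 0)
    (b : V) (hb : b ∈ C)
    (x y : V) (hx : x ∈ frontier C) (hx0 : x ≠ 0) (hy : y ∈ frontier C) (hy0 : y ≠ 0)
    (hray : ¬ ∃ t : ℝ, 0 < t ∧ y = t • x)
    (h : V → ℝ)
    (hhoro : ¬ ∃ p ∈ C, ∀ u ∈ C, h u = hilD C u p - hilD C b p)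
    (hBx : ∃ xs : ℕ → V, (∀ n, xs n ∈ C) ∧ AlmostGeod (hilD C) xs ∧
        Tendsto xs atTop (𝓝 x) ∧
        ∀ u ∈ C, Tendsto (fun n => hilD C u (xs n) - hilD C b (xs n)) atTop (𝓝 (h u)))
    (hBy : ∃ ys : ℕ → V, (∀ n, ys n ∈ C) ∧ AlmostGeod (hilD C) ys ∧
        Tendsto ys atTop (𝓝 y) ∧
        ∀ u ∈ C, Tendsto (fun n => hilD C u (ys n) - hilD C b (ys n)) atTop (𝓝 (h u))) :
    False :=
  busemann_sets_disjoint_general C hC hlines b hb x y hx hx0 hy hy0 hray h hBx hBy
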